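/- Let μ, λ, κ be cardinals with μ and λ infinite, let S be the set of finite-support points of A(μ)^κ, and let f be a continuous map from A(μ)^κ into a Hausdorff space Y with w(Y) ≤ λ. Then |f[S]| ≤ λ. -/

import Mathlib

open Cardinal Set Function

universe u

noncomputable section

/-- The density of a topological space: least cardinality of a dense subset. -/
def tdensity (X : Type u) [TopologicalSpace X] : Cardinal.{u} :=
  sInf {c : Cardinal.{u} | ∃ s : Set X, Dense s ∧ #s = c}

/-- The weight of a topological space: least cardinality of a base. -/
def tweight (X : Type u) [TopologicalSpace X] : Cardinal.{u} :=
  sInf {c : Cardinal.{u} | ∃ B : Set (Set X), TopologicalSpace.IsTopologicalBasis B ∧ #B = c}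

/-- The π-weight: least cardinality of a π-base. -/
def piWeight (X : Type u) [TopologicalSpace X] : Cardinal.{u} :=
  sInf {c : Cardinal.{u} | ∃ B : Set (Set X),
    (∀ U ∈ B, IsOpen U ∧ U.Nonempty) ∧
    (∀ V : Set X, IsOpen V → V.Nonempty → ∃ U ∈ B, U ⊆ V) ∧ #B = c}

/-- ĉ(X): the least cardinal κ such that X has no pairwise disjoint family of κ
nonempty open sets. -/
def hatCell (X : Type u) [TopologicalSpace X] : Cardinal.{u} :=
  sInf {c : Cardinal.{u} | ¬ ∃ 𝒰 : Set (Set X),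
    (∀ U ∈ 𝒰, IsOpen U ∧ U.Nonempty) ∧ 𝒰.PairwiseDisjoint id ∧ #𝒰 = c}

/-- `H` is a closed G_λ set: closed and the intersection of at most λ open sets. -/
def IsClosedGLambda (lam : Cardinal.{u}) {X : Type u} [TopologicalSpace X] (H : Set X) : Prop :=
  IsClosed H ∧ ∃ 𝒰 : Set (Set X), (∀ U ∈ 𝒰, IsOpen U) ∧ #𝒰 ≤ lam ∧ H = ⋂₀ 𝒰

/-- X ∈ Γ(λ): every closed G_λ set has density ≤ λ. -/
def InGamma (lam : Cardinal.{u}) (X : Type u) [TopologicalSpace X] : Prop :=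
  ∀ H : Set X, IsClosedGLambda lam H → tdensity ↥H ≤ lam

/-- `S` witnesses `X ∈ Δ(λ)`. -/
def DeltaWitness (lam : Cardinal.{u}) (X : Type u) [TopologicalSpace X] (S : Set X) : Prop :=
  Dense S ∧
  (∀ T : Set X, T ⊆ S → #T < lam → tweight ↥(closure T) < lam) ∧
  (∀ (Y : Type u) (_ : TopologicalSpace Y), T2Space Y → ∀ f : X → Y,
     Continuous f → Surjective f → tweight Y = lam → #(f '' S) = lam)

/-- X ∈ Δ(λ). -/
def InDelta (lam : Cardinal.{u}) (X : Type u) [TopologicalSpace X] : Prop :=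
  lam ≤ tweight X ∧ ∃ S : Set X, DeltaWitness lam X S

/-- A canonical discrete space of cardinality `c`. -/
instance (c : Cardinal.{u}) : TopologicalSpace c.out := ⊥

instance (c : Cardinal.{u}) : DiscreteTopology c.out := ⟨rfl⟩

/-- A(μ): one-point compactification of a discrete space of cardinality μ. -/
def ACompact (μ : Cardinal.{u}) : Type u := OnePoint μ.out

instance (μ : Cardinal.{u}) : TopologicalSpace (ACompact μ) :=
  inferInstanceAs (TopologicalSpace (OnePoint μ.out))

/-- A(μ)^κ. -/
def APow (μ κ : Cardinal.{u}) : Type u := κ.out → ACompact μ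

instance (μ κ : Cardinal.{u}) : TopologicalSpace (APow μ κ) :=
  inferInstanceAs (TopologicalSpace (κ.out → ACompact μ))

/-- The set of finite-support points of A(μ)^κ. -/
def finSupport (μ κ : Cardinal.{u}) : Set (APow μ κ) :=
  {x | {ξ | x ξ ≠ (OnePoint.infty : OnePoint μ.out)}.Finite}

/-- X is polyadic: a continuous image of some A(μ)^κ. -/
def IsPolyadic (X : Type u) [TopologicalSpace X] : Prop :=
  ∃ μ κ : Cardinal.{u}, ℵ₀ ≤ μ ∧ ∃ f : APow μ κ → X, Continuous f ∧ Surjective f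

/-!
Points of `A(μ)^κ` are separated by the continuous maps `collapse E M` (`E ⊆ κ`, `M ⊆ μ`
finite), which send every coordinate outside `E`, and every value outside `M`, to `∞`; these maps
form a directed family. By compactness, any two disjoint closed sets are already separated by one
of them. Applying this to the pairs of basic open sets of `Y` whose preimages have disjoint
closures yields sets `A ⊆ κ`, `Λ ⊆ μ` of size at most `λ` with `f ∘ collapse A Λ = f`.
Hence `f[S] = f[collapse A Λ [S]]`, and a collapsed finite-support point is a finite partial
function from `A` to `Λ`, of which there are at most `λ`.
-/

open Topology TopologicalSpace

theorem exists_isTopologicalBasis_mk_eq_tweight (X : Type u) [TopologicalSpace X] :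
    ∃ B : Set (Set X), IsTopologicalBasis B ∧ #B = tweight X :=
  csInf_mem (s := {c | ∃ B : Set (Set X), IsTopologicalBasis B ∧ #B = c})
    ⟨_, _, isTopologicalBasis_opens, rfl⟩

theorem Cardinal.mk_setOf_finite_subset_le {β : Type u} (T : Set β) :
    #{s : Set β | s.Finite ∧ s ⊆ T} ≤ max ℵ₀ #T := by
  classical
  have hsurj : Surjective fun t : Finset T =>
      (⟨(↑) '' (t : Set T), t.finite_toSet.image _, by simp⟩ : {s : Set β | s.Finite ∧ s ⊆ T}) := by
    rintro ⟨s, hs, hsT⟩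
    refine ⟨(hs.preimage Subtype.val_injective.injOn).toFinset, Subtype.ext ?_⟩
    simpa using hsT
  calc #{s : Set β | s.Finite ∧ s ⊆ T} ≤ #(Finset T) := mk_le_of_surjective hsurj
    _ ≤ #(List T) := mk_le_of_surjective List.toFinset_surjective
    _ ≤ max ℵ₀ #T := mk_list_le_max _

theorem Cardinal.mk_biUnion_finset_le {ι β : Type u} {lam : Cardinal.{u}} (hlam : ℵ₀ ≤ lam)
    (s : ι → Finset β) {I : Set ι} (hI : #I ≤ lam) : #(⋃ i ∈ I, (s i : Set β)) ≤ lam :=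
  (mk_biUnion_le _ _).trans <| mul_le_of_le hlam hI <|
    ciSup_le' fun _ => (lt_aleph0_of_finite _).le.trans hlam

theorem exists_forall_ne_of_directed {X Z ι : Type*} [TopologicalSpace X] [CompactSpace X]
    [TopologicalSpace Z] [T2Space Z] [Preorder ι] [IsDirectedOrder ι] [Nonempty ι]
    (g : ι → X → Z) (hg : ∀ i, Continuous (g i))
    (hmono : ∀ ⦃i j⦄, i ≤ j → ∀ x y, g j x = g j y → g i x = g i y)
    (hsep : ∀ x y, x ≠ y → ∃ i, g i x ≠ g i y)
    {H K : Set X} (hH : IsClosed H) (hK : IsClosed K) (hHK : Disjoint H K) :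
    ∃ i, ∀ x ∈ H, ∀ y ∈ K, g i x ≠ g i y := by
  have hcover : H ×ˢ K ⊆ ⋃ i, {q : X × X | g i q.1 ≠ g i q.2} := fun q hq =>
    mem_iUnion.2 (hsep _ _ (hHK.ne_of_mem hq.1 hq.2))
  obtain ⟨i, hi⟩ := (hH.prod hK).isCompact.elim_directed_cover _
    (fun i => (isClosed_eq ((hg i).comp continuous_fst) ((hg i).comp continuous_snd)).isOpen_compl)
    hcover (Monotone.directed_le fun i j hij q hq h => hq (hmono hij _ _ h))
  exact ⟨i, fun x hx y hy => hi (mk_mem_prod hx hy)⟩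

theorem exists_mem_basis_disjoint_closure_preimage {X Y : Type*} [TopologicalSpace X]
    [CompactSpace X] [TopologicalSpace Y] [T2Space Y] {B : Set (Set Y)}
    (hB : IsTopologicalBasis B) {f : X → Y} (hf : Continuous f) {x y : X} (hxy : f x ≠ f y) :
    ∃ U ∈ B, ∃ V ∈ B, f x ∈ U ∧ f y ∈ V ∧
      Disjoint (closure (f ⁻¹' U)) (closure (f ⁻¹' V)) := by
  -- `Y` need not be regular, but the compact Hausdorff space `range f` is.
  have : CompactSpace (range f) := isCompact_iff_compactSpace.1 (isCompact_range hf)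
  have hf' : Continuous (rangeFactorization f) := hf.rangeFactorization
  obtain ⟨u, hxu, hu, v, hyv, hv, huv⟩ := exists_open_nhds_disjoint_closure
    (x := rangeFactorization f x) (y := rangeFactorization f y) (hxy <| congrArg Subtype.val ·)
  obtain ⟨u', hu', rfl⟩ := isOpen_induced_iff.1 hu
  obtain ⟨v', hv', rfl⟩ := isOpen_induced_iff.1 hv
  obtain ⟨U, hUB, hxU, hUu⟩ := hB.exists_subset_of_mem_open hxu hu'
  obtain ⟨V, hVB, hyV, hVv⟩ := hB.exists_subset_of_mem_open hyv hv'
  refine ⟨U, hUB, V, hVB, hxU, hyV, (huv.preimage (rangeFactorization f)).mono ?_ ?_⟩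
  · exact (closure_mono (preimage_mono hUu)).trans
      (hf'.closure_preimage_subset (Subtype.val ⁻¹' u'))
  · exact (closure_mono (preimage_mono hVv)).trans
      (hf'.closure_preimage_subset (Subtype.val ⁻¹' v'))

theorem exists_mk_le_forall_eq_imp_eq {X Z : Type*} {Y ι : Type u} [TopologicalSpace X]
    [CompactSpace X] [TopologicalSpace Y] [T2Space Y] [TopologicalSpace Z] [T2Space Z]
    [Preorder ι] [IsDirectedOrder ι] [Nonempty ι]
    (g : ι → X → Z) (hg : ∀ i, Continuous (g i))
    (hmono : ∀ ⦃i j⦄, i ≤ j → ∀ x y, g j x = g j y → g i x = g i y)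
    (hsep : ∀ x y, x ≠ y → ∃ i, g i x ≠ g i y)
    {B : Set (Set Y)} (hB : IsTopologicalBasis B) {f : X → Y} (hf : Continuous f) :
    ∃ I : Set ι, #I ≤ #B * #B ∧ ∀ x y, (∀ i ∈ I, g i x = g i y) → f x = f y := by
  set P := {p : B × B | Disjoint (closure (f ⁻¹' p.1)) (closure (f ⁻¹' p.2))}
  have hP (p : P) : ∃ i, ∀ x ∈ closure (f ⁻¹' p.1.1), ∀ y ∈ closure (f ⁻¹' p.1.2),
      g i x ≠ g i y :=
    exists_forall_ne_of_directed g hg hmono hsep isClosed_closure isClosed_closure p.2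
  choose i hi using hP
  refine ⟨range i, mk_range_le.trans ((mk_set_le P).trans_eq (by simp)), fun x y hxy => ?_⟩
  by_contra hne
  obtain ⟨U, hU, V, hV, hxU, hyV, hUV⟩ := exists_mem_basis_disjoint_closure_preimage hB hf hne
  exact hi ⟨(⟨U, hU⟩, ⟨V, hV⟩), hUV⟩ x (subset_closure hxU) y (subset_closure hyV)
    (hxy _ (mem_range_self _))

namespace OnePoint

variable {ι α : Type*}

open Classical in
def collapse (E : Set ι) (M : Set α) (x : ι → OnePoint α) : ι → OnePoint α :=
  fun ξ => if ξ ∈ E ∧ x ξ ∈ ((↑) '' M : Set (OnePoint α)) then x ξ else ∞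

theorem collapse_apply_eq_coe_iff {E : Set ι} {M : Set α} {x : ι → OnePoint α} {ξ : ι}
    {a : α} : collapse E M x ξ = a ↔ ξ ∈ E ∧ a ∈ M ∧ x ξ = a := by
  simp only [collapse]
  split_ifs with h
  · refine ⟨fun hx => ⟨h.1, ?_, hx⟩, fun h' => h'.2.2⟩
    obtain ⟨b, hb, hbx⟩ := h.2
    rwa [← coe_injective (hbx.trans hx)]
  · exact ⟨fun h' => absurd h'.symm (coe_ne_infty a),
      fun h' => absurd ⟨h'.1, a, h'.2.1, h'.2.2.symm⟩ h⟩

theorem collapse_collapse {E E' : Set ι} {M M' : Set α} (hE : E ⊆ E') (hM : M ⊆ M')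
    (x : ι → OnePoint α) : collapse E M (collapse E' M' x) = collapse E M x := by
  funext ξ
  refine Option.ext fun a => ?_
  change collapse _ _ _ ξ = (a : OnePoint α) ↔ collapse _ _ _ ξ = (a : OnePoint α)
  simp only [collapse_apply_eq_coe_iff]
  exact ⟨fun ⟨hξ, ha, _, _, hx⟩ => ⟨hξ, ha, hx⟩, fun ⟨hξ, ha, hx⟩ => ⟨hξ, ha, hE hξ, hM ha, hx⟩⟩

theorem collapse_eq_of_collapse_eq {E E' : Set ι} {M M' : Set α} (hE : E ⊆ E') (hM : M ⊆ M')
    {x y : ι → OnePoint α} (h : collapse E' M' x = collapse E' M' y) :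
    collapse E M x = collapse E M y := by
  rw [← collapse_collapse hE hM x, h, collapse_collapse hE hM]

theorem exists_collapse_ne {x y : ι → OnePoint α} (h : x ≠ y) :
    ∃ E : Finset ι, ∃ M : Finset α, collapse ↑E ↑M x ≠ collapse ↑E ↑M y := by
  obtain ⟨ξ, hξ⟩ := Function.ne_iff.1 h
  obtain ⟨a, ha⟩ : ∃ a : α, ¬(x ξ = a ↔ y ξ = a) := by
    by_contra! h'
    exact hξ (Option.ext h')
  refine ⟨{ξ}, {a}, fun hxy => ha ?_⟩
  simpa [collapse_apply_eq_coe_iff] using congrArg (· = (a : OnePoint α)) (congrFun hxy ξ)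

def coeGraph (z : ι → OnePoint α) : Set (ι × α) :=
  {p | z p.1 = p.2}

theorem coeGraph_injective : Injective (coeGraph : (ι → OnePoint α) → Set (ι × α)) :=
  fun _ _ h => funext fun ξ => Option.ext fun a => Set.ext_iff.1 h (ξ, a)

theorem coeGraph_collapse_finite_subset {E : Set ι} {M : Set α} {x : ι → OnePoint α}
    (hx : {ξ | x ξ ≠ ∞}.Finite) :
    (coeGraph (collapse E M x)).Finite ∧ coeGraph (collapse E M x) ⊆ E ×ˢ M := by
  have hsub : coeGraph (collapse E M x) ⊆ E ×ˢ M := fun p hp =>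
    ⟨(collapse_apply_eq_coe_iff.1 hp).1, (collapse_apply_eq_coe_iff.1 hp).2.1⟩
  refine ⟨Finite.of_finite_image (f := Prod.fst) (hx.subset ?_) ?_, hsub⟩
  · rintro _ ⟨p, hp, rfl⟩
    simp [(collapse_apply_eq_coe_iff.1 hp).2.2]
  · rintro ⟨ξ, a⟩ ha ⟨ξ', b⟩ hb (rfl : ξ = ξ')
    exact Prod.ext rfl (coe_injective ((ha : _ = _).symm.trans hb))

theorem mk_image_collapse_finite_le {ι α : Type u} {E : Set ι} {M : Set α}
    {lam : Cardinal.{u}} (hlam : ℵ₀ ≤ lam) (hE : #E ≤ lam) (hM : #M ≤ lam) :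
    #(collapse E M '' {x | {ξ | x ξ ≠ ∞}.Finite}) ≤ lam := by
  rw [← mk_image_eq_of_injOn _ _ coeGraph_injective.injOn]
  calc _ ≤ #{s : Set (ι × α) | s.Finite ∧ s ⊆ E ×ˢ M} := by
        refine mk_le_mk_of_subset ?_
        rintro _ ⟨_, ⟨x, hx, rfl⟩, rfl⟩
        exact coeGraph_collapse_finite_subset hx
    _ ≤ max ℵ₀ #(E ×ˢ M) := mk_setOf_finite_subset_le _
    _ ≤ lam := max_le hlam (by rw [mk_setProd]; exact mul_le_of_le hlam hE hM)

variable [TopologicalSpace α] [DiscreteTopology α]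

theorem continuous_collapse (E : Set ι) {M : Set α} (hM : M.Finite) :
    Continuous (collapse E M) := by
  classical
  have hclopen : IsClopen ((↑) '' M : Set (OnePoint α)) :=
    ⟨(hM.image _).isClosed, isOpen_image_coe.2 (isOpen_discrete M)⟩
  refine continuous_pi fun ξ => ?_
  by_cases hξ : ξ ∈ E
  · simp only [collapse, hξ, true_and]
    have hfr : frontier {x : ι → OnePoint α | x ξ ∈ ((↑) '' M : Set (OnePoint α))} = ∅ :=
      (hclopen.preimage (continuous_apply ξ)).frontier_eq
    exact continuous_if (fun x hx => absurd hx (hfr ▸ notMem_empty x))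
      (continuous_apply ξ).continuousOn continuousOn_const
  · simpa [collapse, hξ] using continuous_const

theorem exists_forall_comp_collapse_eq {ι α Y : Type u} [TopologicalSpace α]
    [DiscreteTopology α] [TopologicalSpace Y] [T2Space Y] {B : Set (Set Y)}
    (hB : IsTopologicalBasis B) {lam : Cardinal.{u}} (hlam : ℵ₀ ≤ lam) (hBlam : #B ≤ lam)
    {f : (ι → OnePoint α) → Y} (hf : Continuous f) :
    ∃ (A : Set ι) (Λ : Set α), #A ≤ lam ∧ #Λ ≤ lam ∧ ∀ x, f (collapse A Λ x) = f x := by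
  classical
  obtain ⟨I, hI, hfI⟩ := exists_mk_le_forall_eq_imp_eq (ι := Finset ι × Finset α)
    (fun i => collapse ↑i.1 ↑i.2) (fun i => continuous_collapse _ i.2.finite_toSet)
    (fun i j (hij : i ≤ j) _ _ =>
      collapse_eq_of_collapse_eq (Finset.coe_subset.2 hij.1) (Finset.coe_subset.2 hij.2))
    (fun x y h => let ⟨E, M, hEM⟩ := exists_collapse_ne h; ⟨(E, M), hEM⟩) hB hf
  have hIlam : #I ≤ lam := hI.trans (mul_le_of_le hlam hBlam hBlam)
  refine ⟨⋃ i ∈ I, ↑i.1, ⋃ i ∈ I, ↑i.2, mk_biUnion_finset_le hlam _ hIlam,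
    mk_biUnion_finset_le hlam _ hIlam, fun x => hfI _ _ fun i hi => ?_⟩
  exact collapse_collapse (subset_biUnion_of_mem (u := fun i => (i.1 : Set ι)) hi)
    (subset_biUnion_of_mem (u := fun i => (i.2 : Set α)) hi) x

end OnePoint

open OnePoint in
theorem statement12_general (μ lam κ : Cardinal.{u}) (hlam : ℵ₀ ≤ lam)
    {Y : Type u} [TopologicalSpace Y] [T2Space Y] (hY : tweight Y ≤ lam)
    (f : APow μ κ → Y) (hf : Continuous f) :
    #(f '' finSupport μ κ) ≤ lam := by
  obtain ⟨B, hB, hBw⟩ := exists_isTopologicalBasis_mk_eq_tweight Y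
  obtain ⟨A, Λ, hA, hΛ, hfA⟩ := exists_forall_comp_collapse_eq (ι := κ.out) (α := μ.out) hB hlam
    (hBw.trans_le hY) hf
  calc #(f '' finSupport μ κ) ≤ #(f '' (collapse A Λ '' finSupport μ κ)) :=
        mk_le_mk_of_subset fun _ ⟨x, hx, hfx⟩ => ⟨_, mem_image_of_mem _ hx, (hfA x).trans hfx⟩
    _ ≤ #(collapse A Λ '' finSupport μ κ) := mk_image_le
    _ ≤ lam := mk_image_collapse_finite_le hlam hA hΛ

/-- the image of the finite-support points has cardinality ≤ λ. -/
theorem statement12 (μ lam κ : Cardinal.{u}) (hμ : ℵ₀ ≤ μ) (hlam : ℵ₀ ≤ lam)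
    {Y : Type u} [TopologicalSpace Y] [T2Space Y] (hY : tweight Y ≤ lam)
    (f : APow μ κ → Y) (hf : Continuous f) :
    #(f '' finSupport μ κ) ≤ lam :=
  statement12_general μ lam κ hlam hY f hf
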